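/- arXiv:2111.03238 — 2 statements merged into one kernel-verified Lean document; each statement's English description precedes it below -/
import Mathlib

section
/- Let A ∈ ℝ^{n×n×n×n} be a skew partial-symmetric tensor, i.e., A_{ijkl} = A_{jikl} = A_{ijlk} and A_{ijkl} = −A_{klij} for all indices i,j,k,l. Then there exist finitely many real numbers λ_i and vectors p_i, q_i ∈ ℝ^n such that A = Σ_i λ_i (p_i∘p_i∘q_i∘q_i − q_i∘q_i∘p_i∘p_i). -/
open scoped BigOperators

/-- A fourth-order real tensor is skew partial-symmetric. -/
def IsSkewPS {n : ℕ} (A : Fin n → Fin n → Fin n → Fin n → ℝ) : Prop :=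
  ∀ i j k l, A i j k l = A j i k l ∧ A i j k l = A i j l k ∧
    A i j k l = -A k l i j


noncomputable def vv {n : ℕ} (s : Fin n ⊕ Fin n × Fin n) (i : Fin n) : ℝ :=
  match s with
  | .inl a => if i = a then 1 else 0
  | .inr (a, b) => (if i = a then 1 else 0) + (if i = b then 1 else 0)

noncomputable def cc {n : ℕ} (M : Fin n → Fin n → ℝ) : (Fin n ⊕ Fin n × Fin n) → ℝ
  | .inl a => -∑ b, M a b
  | .inr (a, b) => M a b / 2

lemma sym_decomp {n : ℕ} (M : Fin n → Fin n → ℝ) (hM : ∀ a b, M a b = M b a)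
    (i j : Fin n) : M i j = ∑ s, cc M s * vv s i * vv s j := by
  rw [Fintype.sum_sum_type]
  simp only [cc, vv, Fintype.sum_prod_type]
  by_cases h : i = j
  · subst h
    simp only [mul_add, add_mul, mul_ite, ite_mul, mul_one, mul_zero, zero_mul, one_mul,
      Finset.sum_add_distrib, Finset.sum_ite_eq, Finset.sum_ite_eq', Finset.mem_univ, if_true]
    have h2 : ∑ x, M x i / 2 = (∑ x, M i x) / 2 := by
      rw [Finset.sum_div]; exact Finset.sum_congr rfl fun x _ => by rw [hM]
    have h4 : (∑ x, ∑ x1, if i = x then (if i = x then M x x1 / 2 else 0)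
        + (if i = x1 then M x x1 / 2 else 0) else 0)
        = (∑ x1, M i x1) / 2 + M i i / 2 := by
      rw [Finset.sum_eq_single i]
      · simp [Finset.sum_add_distrib, Finset.sum_ite_eq, Finset.sum_div]
      · intro b _ hb; simp [if_neg (Ne.symm hb)]
      · simp
    rw [h2, h4]; ring
  · simp only [mul_add, add_mul, mul_ite, ite_mul, mul_one, mul_zero, zero_mul, one_mul,
      Finset.sum_add_distrib, Finset.sum_ite_eq, Finset.sum_ite_eq', Finset.mem_univ, if_true,
      h, if_false]
    simp [h, hM i j]

noncomputable def Nmat {n : ℕ} (a b : Fin n) (k l : Fin n) : ℝ :=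
  ((if k = a then 1 else 0) * (if l = b then 1 else 0)
    + (if k = b then 1 else 0) * (if l = a then 1 else 0)) / 2

lemma contract {n : ℕ} (B : Fin n → Fin n → ℝ) (k l : Fin n) :
    ∑ t : Fin n × Fin n, B t.1 t.2 * Nmat t.1 t.2 k l = (B k l + B l k) / 2 := by
  simp only [Nmat, Fintype.sum_prod_type]
  have key : ∀ x x1 : Fin n, B x x1 *
      (((if k = x then (1:ℝ) else 0) * (if l = x1 then 1 else 0)
        + (if k = x1 then 1 else 0) * (if l = x then 1 else 0)) / 2)
      = (if l = x1 then (if k = x then B x x1 / 2 else 0) else 0)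
        + (if k = x1 then (if l = x then B x x1 / 2 else 0) else 0) := by
    intro x x1
    by_cases h1 : l = x1 <;> by_cases h2 : k = x <;> by_cases h3 : l = x <;>
      by_cases h4 : k = x1 <;> simp [h1, h2, h3, h4] <;> split_ifs <;> ring
  calc ∑ x, ∑ x1, B x x1 *
        (((if k = x then (1:ℝ) else 0) * (if l = x1 then 1 else 0)
          + (if k = x1 then 1 else 0) * (if l = x then 1 else 0)) / 2)
      = ∑ x, ∑ x1, ((if l = x1 then (if k = x then B x x1 / 2 else 0) else 0)
        + (if k = x1 then (if l = x then B x x1 / 2 else 0) else 0)) :=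
        Finset.sum_congr rfl fun x _ => Finset.sum_congr rfl fun x1 _ => key x x1
    _ = (B k l + B l k) / 2 := by
        simp [Finset.sum_add_distrib, Finset.sum_ite_eq]; ring

lemma Nmat_symm {n : ℕ} (a b k l : Fin n) : Nmat a b k l = Nmat a b l k := by
  simp only [Nmat]; ring


/-- A skew partial-symmetric tensor can be written as a finite sum
`A = Σ λ_t (p_t∘p_t∘q_t∘q_t − q_t∘q_t∘p_t∘p_t)`. -/
theorem skew_ps_vector_decomposition {n : ℕ}
    (A : Fin n → Fin n → Fin n → Fin n → ℝ) (hA : IsSkewPS A) :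
    ∃ (r : ℕ) (lam : Fin r → ℝ) (p q : Fin r → Fin n → ℝ),
      ∀ i j k l, A i j k l =
        ∑ t, lam t * (p t i * p t j * q t k * q t l -
          q t i * q t j * p t k * p t l) := by
  classical
  set S := (Fin n ⊕ Fin n × Fin n) with hS
  set I := (Fin n × Fin n) × (S × S) with hI
  let Mt : Fin n × Fin n → Fin n → Fin n → ℝ := fun t i j => A i j t.1 t.2
  let Nt : Fin n × Fin n → Fin n → Fin n → ℝ := fun t => Nmat t.1 t.2
  let Lam : I → ℝ := fun x => (1/2) * cc (Mt x.1) x.2.1 * cc (Nt x.1) x.2.2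
  let P : I → Fin n → ℝ := fun x => vv x.2.1
  let Q : I → Fin n → ℝ := fun x => vv x.2.2
  let e : I ≃ Fin (Fintype.card I) := Fintype.equivFin I
  refine ⟨Fintype.card I, fun t => Lam (e.symm t), fun t => P (e.symm t),
    fun t => Q (e.symm t), fun i j k l => ?_⟩
  rw [Equiv.sum_comp e.symm (fun x : I => Lam x * (P x i * P x j * Q x k * Q x l -
    Q x i * Q x j * P x k * P x l))]
  -- split the sum over I
  rw [Fintype.sum_prod_type]
  -- step 1 : A = (1/2) Σ_t (M⊗N - N⊗M)
  have hMsymm : ∀ t : Fin n × Fin n, ∀ a b, Mt t a b = Mt t b a :=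
    fun t a b => (hA a b t.1 t.2).1
  have hNsymm : ∀ t : Fin n × Fin n, ∀ a b, Nt t a b = Nt t b a :=
    fun t a b => Nmat_symm t.1 t.2 a b
  have step1 : A i j k l = (1/2) * ∑ t : Fin n × Fin n,
      (Mt t i j * Nt t k l - Nt t i j * Mt t k l) := by
    rw [Finset.sum_sub_distrib]
    have c1 : ∑ t : Fin n × Fin n, Mt t i j * Nt t k l = A i j k l := by
      rw [contract (fun a b => A i j a b) k l]
      rw [← (hA i j k l).2.1]; ring
    have c2 : ∑ t : Fin n × Fin n, Nt t i j * Mt t k l = -A i j k l := by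
      have : ∀ t : Fin n × Fin n, Nt t i j * Mt t k l = Mt t k l * Nt t i j :=
        fun t => mul_comm _ _
      rw [Finset.sum_congr rfl fun t _ => this t, contract (fun a b => A k l a b) i j]
      rw [← (hA k l i j).2.1, (hA i j k l).2.2]; ring
    rw [c1, c2]; ring
  rw [step1, Finset.mul_sum]
  refine Finset.sum_congr rfl fun t _ => ?_
  -- expand the two symmetric matrices
  have hM := fun a b => sym_decomp (Mt t) (hMsymm t) a b
  have hN := fun a b => sym_decomp (Nt t) (hNsymm t) a b
  rw [hM i j, hN k l, hN i j, hM k l]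
  -- expand product of sums
  rw [Fintype.sum_prod_type]
  rw [Finset.sum_mul_sum, Finset.sum_mul_sum]
  have comm : (∑ x : S, ∑ y : S, cc (Nt t) x * vv x i * vv x j * (cc (Mt t) y * vv y k * vv y l))
      = ∑ y : S, ∑ x : S, cc (Nt t) x * vv x i * vv x j * (cc (Mt t) y * vv y k * vv y l) :=
    Finset.sum_comm
  rw [comm, ← Finset.sum_sub_distrib, Finset.mul_sum]
  refine Finset.sum_congr rfl fun s _ => ?_
  rw [← Finset.sum_sub_distrib, Finset.mul_sum]
  refine Finset.sum_congr rfl fun u _ => ?_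
  simp only [Lam, P, Q]
  ring
end

section
/- Let A = Σ_{i=1}^r λ_i E_i∘conj(E_i), where λ_1,…,λ_r are nonzero real numbers with |λ_1| > |λ_2| > ⋯ > |λ_r| > 0, and E_1,…,E_r ∈ ℂ^{n×n} are symmetric matrices with ⟨E_i,E_j⟩ = δ_ij. Define recursively A_0 = A, and for j = 1,…,r: let X̂_j be any maximizer of |⟨A_{j−1}, X∘conj(X)⟩| over symmetric matrices X ∈ ℂ^{n×n} with ‖X‖_F = 1, let λ̂_j = ⟨A_{j−1}, X̂_j∘conj(X̂_j)⟩, and set A_j = A_{j−1} − λ̂_j X̂_j∘conj(X̂_j). Then for every j = 1,…,r there is a complex number c_j with |c_j| = 1 such that λ̂_j = λ_j and X̂_j = c_j·E_j. -/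
/-
Identify `n × n` matrices with vectors of `ℂ^(n × n)`. Then the `E t` are orthonormal, and for
`A_{j-1} = ∑_{t ≥ j} λ_t E_t ∘ conj(E_t)` one has
`⟨A_{j-1}, X ∘ conj(X)⟩ = ∑_{t ≥ j} λ_t |⟨E_t, X⟩|²`. For a unit `X`, Bessel's inequality bounds
the modulus of this weighted sum by `|λ_j|`, which `X = E_j` attains; since `|λ_t| < |λ_j|` for
`t > j`, equality forces all the weight of `X` onto `E_j`, i.e. `X = c E_j` with `|c| = 1`. Then
`λ̂_j = λ_j` and `X̂_j ∘ conj(X̂_j) = E_j ∘ conj(E_j)`, so the deflation removes exactly the `j`-th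
term, and induction on `j` continues.
-/

open scoped BigOperators

/-- Inner product of fourth-order complex tensors. -/
noncomputable def tInner {n : ℕ} (A B : Fin n → Fin n → Fin n → Fin n → ℂ) : ℂ :=
  ∑ i, ∑ j, ∑ k, ∑ l, A i j k l * starRingEnd ℂ (B i j k l)

/-- Frobenius norm of a complex matrix. -/
noncomputable def mNorm {n : ℕ} (X : Matrix (Fin n) (Fin n) ℂ) : ℝ :=
  Real.sqrt (∑ i, ∑ j, ‖X i j‖ ^ 2)

/-- The fourth-order tensor `X ∘ conj(X)`. -/
def conjOuter {n : ℕ} (X : Matrix (Fin n) (Fin n) ℂ) :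
    Fin n → Fin n → Fin n → Fin n → ℂ :=
  fun i j k l => X i j * starRingEnd ℂ (X k l)

open Finset
open scoped ComplexConjugate

theorem Finset.weights_eq_single_of_le_abs_weighted_sum {ι : Type*} {S : Finset ι} {s : ι}
    {lam w : ι → ℝ} (hs : s ∈ S) (hlam : lam s ≠ 0)
    (hdom : ∀ t ∈ S, t ≠ s → |lam t| < |lam s|) (hw : ∀ t ∈ S, 0 ≤ w t)
    (hw1 : ∑ t ∈ S, w t ≤ 1) (hmax : |lam s| ≤ |∑ t ∈ S, lam t * w t|) :
    w s = 1 ∧ ∀ t ∈ S, t ≠ s → w t = 0 := by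
  have hle : ∀ t ∈ S, |lam t| ≤ |lam s| := fun t ht =>
    (eq_or_ne t s).elim (fun h => h ▸ le_rfl) fun h => (hdom t ht h).le
  have hgap_nonneg : ∀ t ∈ S, 0 ≤ (|lam s| - |lam t|) * w t := fun t ht =>
    mul_nonneg (sub_nonneg.2 (hle t ht)) (hw t ht)
  have hgap : ∑ t ∈ S, (|lam s| - |lam t|) * w t = 0 := by
    refine le_antisymm ?_ (sum_nonneg hgap_nonneg)
    calc ∑ t ∈ S, (|lam s| - |lam t|) * w t
        = |lam s| * ∑ t ∈ S, w t - ∑ t ∈ S, |lam t| * w t := by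
          rw [mul_sum, ← sum_sub_distrib]; exact sum_congr rfl fun _ _ => by ring
      _ ≤ |lam s| * 1 - |∑ t ∈ S, lam t * w t| := by
          gcongr
          refine (abs_sum_le_sum_abs _ _).trans_eq (sum_congr rfl fun t ht => ?_)
          rw [abs_mul, abs_of_nonneg (hw t ht)]
      _ ≤ 0 := by linarith
  have hoff : ∀ t ∈ S, t ≠ s → w t = 0 := fun t ht hts =>
    (mul_eq_zero.1 ((sum_eq_zero_iff_of_nonneg hgap_nonneg).1 hgap t ht)).resolve_left
      (sub_ne_zero.2 (hdom t ht hts).ne')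
  refine ⟨le_antisymm ?_ ?_, hoff⟩
  · exact (single_le_sum hw hs).trans hw1
  · rw [sum_eq_single_of_mem s hs fun t ht hts => by rw [hoff t ht hts, mul_zero], abs_mul,
      abs_of_nonneg (hw s hs)] at hmax
    exact (le_mul_iff_one_le_right (abs_pos.2 hlam)).1 hmax

section

variable {𝕜 V ι : Type*} [RCLike 𝕜] [NormedAddCommGroup V] [InnerProductSpace 𝕜 V]

theorem Orthonormal.exists_eq_smul_of_norm_inner_eq_one {e : ι → V} (he : Orthonormal 𝕜 e)
    {s : ι} {v : V} (hv : ‖v‖ = 1) (hvs : ‖(inner 𝕜 (e s) v : 𝕜)‖ = 1) :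
    ∃ c : 𝕜, ‖c‖ = 1 ∧ v = c • e s := by
  have hes : e s ≠ 0 := he.ne_zero s
  obtain ⟨c, -, rfl⟩ := (norm_inner_eq_norm_iff hes (norm_ne_zero_iff.1 (hv ▸ one_ne_zero))).1
    (by rw [hvs, hv, he.1 s, one_mul])
  exact ⟨c, by simpa [norm_smul, he.1 s] using hv, rfl⟩

theorem Orthonormal.exists_eq_smul_of_le_abs_weighted_sum {e : ι → V} (he : Orthonormal 𝕜 e)
    {S : Finset ι} {s : ι} {lam : ι → ℝ} (hs : s ∈ S) (hlam : lam s ≠ 0)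
    (hdom : ∀ t ∈ S, t ≠ s → |lam t| < |lam s|) {v : V} (hv : ‖v‖ = 1)
    (hmax : |lam s| ≤ |∑ t ∈ S, lam t * ‖(inner 𝕜 (e t) v : 𝕜)‖ ^ 2|) :
    ∃ c : 𝕜, ‖c‖ = 1 ∧ v = c • e s := by
  have hbessel : ∑ t ∈ S, ‖(inner 𝕜 (e t) v : 𝕜)‖ ^ 2 ≤ 1 := by
    simpa [hv] using he.sum_inner_products_le (s := S) v
  have hws := (weights_eq_single_of_le_abs_weighted_sum hs hlam hdom
    (fun t _ => sq_nonneg _) hbessel hmax).1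
  exact he.exists_eq_smul_of_norm_inner_eq_one hv
    ((pow_eq_one_iff_of_nonneg (norm_nonneg _) two_ne_zero).1 hws)

end

section Frobenius

variable {n : ℕ}

noncomputable def frobVec (X : Matrix (Fin n) (Fin n) ℂ) : EuclideanSpace ℂ (Fin n × Fin n) :=
  WithLp.toLp 2 fun p => X p.1 p.2

theorem inner_frobVec (X Y : Matrix (Fin n) (Fin n) ℂ) :
    inner ℂ (frobVec X) (frobVec Y) = ∑ i, ∑ j, conj (X i j) * Y i j := by
  simp [frobVec, PiLp.inner_apply, Fintype.sum_prod_type, mul_comm]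

theorem mNorm_eq_norm_frobVec (X : Matrix (Fin n) (Fin n) ℂ) : mNorm X = ‖frobVec X‖ := by
  simp [mNorm, EuclideanSpace.norm_eq, frobVec, Fintype.sum_prod_type]

theorem orthonormal_frobVec {ι : Type*} [DecidableEq ι] {E : ι → Matrix (Fin n) (Fin n) ℂ}
    (hE : ∀ s t, (∑ i, ∑ j, E s i j * conj (E t i j)) = if s = t then 1 else 0) :
    Orthonormal ℂ (frobVec ∘ E) := by
  rw [orthonormal_iff_ite]
  intro s t
  simpa [inner_frobVec, mul_comm, eq_comm] using hE t s

theorem tInner_conjOuter_conjOuter (X Y : Matrix (Fin n) (Fin n) ℂ) :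
    tInner (conjOuter X) (conjOuter Y) = (‖inner ℂ (frobVec X) (frobVec Y)‖ ^ 2 : ℝ) := by
  rw [Complex.ofReal_pow, ← Complex.conj_mul']
  simp only [tInner, conjOuter, inner_frobVec, map_sum, map_mul, Complex.conj_conj]
  rw [sum_mul]; refine sum_congr rfl fun i _ => ?_
  rw [sum_mul]; refine sum_congr rfl fun j _ => ?_
  rw [mul_sum]; refine sum_congr rfl fun k _ => ?_
  rw [mul_sum]; refine sum_congr rfl fun l _ => ?_
  ring

theorem tInner_sum_smul {ι : Type*} (S : Finset ι) (c : ι → ℂ)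
    (B : ι → Fin n → Fin n → Fin n → Fin n → ℂ) (C : Fin n → Fin n → Fin n → Fin n → ℂ) :
    tInner (∑ t ∈ S, c t • B t) C = ∑ t ∈ S, c t * tInner (B t) C := by
  induction S using Finset.cons_induction with
  | empty => simp [tInner]
  | cons a S ha ih =>
    rw [sum_cons, sum_cons, ← ih]
    simp only [tInner, Pi.add_apply, Pi.smul_apply, smul_eq_mul, add_mul, sum_add_distrib,
      mul_sum, mul_assoc]

theorem conjOuter_smul_of_norm_eq_one {c : ℂ} (hc : ‖c‖ = 1) (X : Matrix (Fin n) (Fin n) ℂ) :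
    conjOuter (c • X) = conjOuter X := by
  have hcc : c * conj c = 1 := by rw [Complex.mul_conj', hc]; norm_num
  ext i j k l
  simp only [conjOuter, Matrix.smul_apply, smul_eq_mul, map_mul]
  linear_combination (X i j * conj (X k l)) * hcc

end Frobenius

section Recovery

variable {n : ℕ} {ι : Type*} {E : ι → Matrix (Fin n) (Fin n) ℂ} {lam : ι → ℝ} {S : Finset ι}

theorem tInner_sum_conjOuter (X : Matrix (Fin n) (Fin n) ℂ) :
    tInner (∑ t ∈ S, (lam t : ℂ) • conjOuter (E t)) (conjOuter X) =
      ((∑ t ∈ S, lam t * ‖inner ℂ (frobVec (E t)) (frobVec X)‖ ^ 2 : ℝ) : ℂ) := by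
  simp only [tInner_sum_smul, tInner_conjOuter_conjOuter, Complex.ofReal_sum, Complex.ofReal_mul]

theorem tInner_sum_conjOuter_of_mem (hE : Orthonormal ℂ (frobVec ∘ E)) {s : ι} (hs : s ∈ S) :
    tInner (∑ t ∈ S, (lam t : ℂ) • conjOuter (E t)) (conjOuter (E s)) = lam s := by
  have hEs : ‖frobVec (E s)‖ = 1 := hE.1 s
  rw [tInner_sum_conjOuter, sum_eq_single_of_mem s hs fun t _ hts => by
    rw [show inner ℂ (frobVec (E t)) (frobVec (E s)) = 0 from hE.2 hts]; simp]
  simp [hEs]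

theorem exists_eq_smul_of_norm_tInner_le (hE : Orthonormal ℂ (frobVec ∘ E)) {s : ι} (hs : s ∈ S)
    (hlam : lam s ≠ 0) (hdom : ∀ t ∈ S, t ≠ s → |lam t| < |lam s|)
    {X : Matrix (Fin n) (Fin n) ℂ} (hX : mNorm X = 1)
    (hmax : ‖tInner (∑ t ∈ S, (lam t : ℂ) • conjOuter (E t)) (conjOuter (E s))‖ ≤
      ‖tInner (∑ t ∈ S, (lam t : ℂ) • conjOuter (E t)) (conjOuter X)‖) :
    ∃ c : ℂ, ‖c‖ = 1 ∧ X = c • E s ∧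
      tInner (∑ t ∈ S, (lam t : ℂ) • conjOuter (E t)) (conjOuter X) = lam s := by
  rw [tInner_sum_conjOuter_of_mem hE hs, tInner_sum_conjOuter, Complex.norm_real,
    Complex.norm_real, Real.norm_eq_abs, Real.norm_eq_abs] at hmax
  rw [mNorm_eq_norm_frobVec] at hX
  obtain ⟨c, hc, hv⟩ := hE.exists_eq_smul_of_le_abs_weighted_sum hs hlam hdom hX hmax
  have hXc : X = c • E s := by
    ext i j
    simpa [frobVec] using congrArg (fun v => v (i, j)) hv
  refine ⟨c, hc, hXc, ?_⟩
  rw [hXc, conjOuter_smul_of_norm_eq_one hc, tInner_sum_conjOuter_of_mem hE hs]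

theorem sub_tInner_smul_conjOuter_eq_sum_erase [DecidableEq ι] (hE : Orthonormal ℂ (frobVec ∘ E))
    {s : ι} (hs : s ∈ S) (hlam : lam s ≠ 0) (hdom : ∀ t ∈ S, t ≠ s → |lam t| < |lam s|)
    {X : Matrix (Fin n) (Fin n) ℂ} (hX : mNorm X = 1)
    (hmax : ‖tInner (∑ t ∈ S, (lam t : ℂ) • conjOuter (E t)) (conjOuter (E s))‖ ≤
      ‖tInner (∑ t ∈ S, (lam t : ℂ) • conjOuter (E t)) (conjOuter X)‖) :
    ∑ t ∈ S, (lam t : ℂ) • conjOuter (E t) -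
        tInner (∑ t ∈ S, (lam t : ℂ) • conjOuter (E t)) (conjOuter X) • conjOuter X =
      ∑ t ∈ S.erase s, (lam t : ℂ) • conjOuter (E t) := by
  obtain ⟨c, hc, rfl, hval⟩ := exists_eq_smul_of_norm_tInner_le hE hs hlam hdom hX hmax
  rw [hval, conjOuter_smul_of_norm_eq_one hc, sum_erase_eq_sub hs]

end Recovery

theorem Fin.filter_castSucc_le_castSucc {r : ℕ} (s : Fin r) :
    ({t | s.castSucc ≤ t.castSucc} : Finset (Fin r)) = Ici s := by
  ext; simp

theorem Fin.filter_succ_le_castSucc {r : ℕ} (s : Fin r) :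
    ({t | s.succ ≤ t.castSucc} : Finset (Fin r)) = Ioi s := by
  ext; simp [Fin.succ_le_castSucc_iff]

theorem smroa_ordered_recovery_general {n r : ℕ}
    (lam : Fin r → ℝ) (E : Fin r → Matrix (Fin n) (Fin n) ℂ)
    (hlam0 : ∀ t, lam t ≠ 0)
    (hlamord : ∀ s t : Fin r, s < t → |lam t| < |lam s|)
    (hEsym : ∀ t, (E t).IsSymm)
    (hEorth : ∀ s t, (∑ i, ∑ j, E s i j * starRingEnd ℂ (E t i j)) =
      if s = t then 1 else 0)
    (A : Fin (r + 1) → Fin n → Fin n → Fin n → Fin n → ℂ)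
    (hA0 : ∀ i j k l, A 0 i j k l =
      ∑ t, (lam t : ℂ) * E t i j * starRingEnd ℂ (E t k l))
    (Xhat : Fin r → Matrix (Fin n) (Fin n) ℂ) (lamHat : Fin r → ℂ)
    (hXnorm : ∀ s, mNorm (Xhat s) = 1)
    (hXmax : ∀ s, ∀ X : Matrix (Fin n) (Fin n) ℂ, X.IsSymm → mNorm X = 1 →
      ‖tInner (A s.castSucc) (conjOuter X)‖ ≤
        ‖tInner (A s.castSucc) (conjOuter (Xhat s))‖)
    (hlamHat : ∀ s, lamHat s = tInner (A s.castSucc) (conjOuter (Xhat s)))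
    (hrec : ∀ s : Fin r, ∀ i j k l, A s.succ i j k l =
      A s.castSucc i j k l - lamHat s * (Xhat s i j * starRingEnd ℂ (Xhat s k l))) :
    ∀ s : Fin r, ∃ c : ℂ, ‖c‖ = 1 ∧
      lamHat s = (lam s : ℂ) ∧ Xhat s = c • E s := by
  have hE := orthonormal_frobVec hEorth
  have hdom : ∀ s, ∀ t ∈ Ici s, t ≠ s → |lam t| < |lam s| := fun s t ht hts =>
    hlamord s t (lt_of_le_of_ne (mem_Ici.1 ht) (Ne.symm hts))
  have hmax : ∀ s, A s.castSucc = ∑ t ∈ Ici s, (lam t : ℂ) • conjOuter (E t) →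
      ‖tInner (∑ t ∈ Ici s, (lam t : ℂ) • conjOuter (E t)) (conjOuter (E s))‖ ≤
        ‖tInner (∑ t ∈ Ici s, (lam t : ℂ) • conjOuter (E t)) (conjOuter (Xhat s))‖ :=
    fun s hs => hs ▸ hXmax s (E s) (hEsym s) ((mNorm_eq_norm_frobVec _).trans (hE.1 s))
  have hinv : ∀ m : Fin (r + 1),
      A m = ∑ t with m ≤ t.castSucc, (lam t : ℂ) • conjOuter (E t) := by
    intro m
    induction m using Fin.induction with
    | zero =>
      ext i j k l
      simp [hA0, Finset.sum_apply, conjOuter, mul_assoc]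
    | succ s ih =>
      rw [Fin.filter_castSucc_le_castSucc] at ih
      have hA : A s.succ = A s.castSucc - lamHat s • conjOuter (Xhat s) := by
        ext i j k l
        exact hrec s i j k l
      rw [hA, hlamHat, ih, Fin.filter_succ_le_castSucc, ← Ici_erase,
        sub_tInner_smul_conjOuter_eq_sum_erase hE (mem_Ici.2 le_rfl) (hlam0 s) (hdom s)
          (hXnorm s) (hmax s ih)]
  intro s
  have hs := hinv s.castSucc
  rw [Fin.filter_castSucc_le_castSucc] at hs
  obtain ⟨c, hc, hX, hval⟩ := exists_eq_smul_of_norm_tInner_le hE (mem_Ici.2 le_rfl) (hlam0 s)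
    (hdom s) (hXnorm s) (hmax s hs)
  exact ⟨c, hc, by rw [hlamHat, hs, hval], hX⟩

/-- When `|λ_1| > |λ_2| > ⋯ > |λ_r| > 0`, the SMROA algorithm recovers the
terms of the decomposition in order. -/
theorem smroa_ordered_recovery {n r : ℕ}
    (lam : Fin r → ℝ) (E : Fin r → Matrix (Fin n) (Fin n) ℂ)
    (hlam0 : ∀ t, lam t ≠ 0)
    (hlamord : ∀ s t : Fin r, s < t → |lam t| < |lam s|)
    (hEsym : ∀ t, (E t).IsSymm)
    (hEorth : ∀ s t, (∑ i, ∑ j, E s i j * starRingEnd ℂ (E t i j)) =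
      if s = t then 1 else 0)
    (A : Fin (r + 1) → Fin n → Fin n → Fin n → Fin n → ℂ)
    (hA0 : ∀ i j k l, A 0 i j k l =
      ∑ t, (lam t : ℂ) * E t i j * starRingEnd ℂ (E t k l))
    (Xhat : Fin r → Matrix (Fin n) (Fin n) ℂ) (lamHat : Fin r → ℂ)
    (hXsym : ∀ s, (Xhat s).IsSymm) (hXnorm : ∀ s, mNorm (Xhat s) = 1)
    (hXmax : ∀ s, ∀ X : Matrix (Fin n) (Fin n) ℂ, X.IsSymm → mNorm X = 1 →
      ‖tInner (A s.castSucc) (conjOuter X)‖ ≤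
        ‖tInner (A s.castSucc) (conjOuter (Xhat s))‖)
    (hlamHat : ∀ s, lamHat s = tInner (A s.castSucc) (conjOuter (Xhat s)))
    (hrec : ∀ s : Fin r, ∀ i j k l, A s.succ i j k l =
      A s.castSucc i j k l - lamHat s * (Xhat s i j * starRingEnd ℂ (Xhat s k l))) :
    ∀ s : Fin r, ∃ c : ℂ, ‖c‖ = 1 ∧
      lamHat s = (lam s : ℂ) ∧ Xhat s = c • E s :=
  smroa_ordered_recovery_general lam E hlam0 hlamord hEsym hEorth A hA0 Xhat lamHat hXnorm hXmax
    hlamHat hrec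
end
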